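/- Let n ≥ 1, f, h: [0,1]ⁿ → ℝ twice continuously differentiable with supremum norm bounds a = ‖f‖_∞, bᵢ = ‖∂f/∂xᵢ‖_∞, cᵢᵢ = ‖∂²f/∂xᵢ²‖_∞, α = ‖h‖_∞, βᵢ = ‖∂h/∂xᵢ‖_∞, γᵢᵢ = ‖∂²h/∂xᵢ²‖_∞. Let t > 0 and define F^c = log Σ_{x∈{0,1}ⁿ : |h(x)|≤tn} e^{f(x)}. Set δ₀ = (√6/n)(Σᵢ(αγᵢᵢ+βᵢ²))^{1/2}, ε₀ = 2√(6/n), η₀ = (√6/n)(Σᵢ(acᵢᵢ+bᵢ²))^{1/2}, and I(x) = Σᵢ(xᵢ log xᵢ + (1-xᵢ)log(1-xᵢ)). Then F^c ≥ sup_{x∈[0,1]ⁿ : |h(x)|≤(t-δ₀)n} (f(x) - I(x)) - ε₀n - η₀n - log 2. -/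

import Mathlib

/-!
Fix `y` in the constrained region and let `X` have independent Bernoulli(`yᵢ`) coordinates.
Revealing the coordinates of `X` one at a time writes `φ(X) - φ(y)` as a sum of martingale
increments: a gradient bound controls each increment and a second-order bound controls its
conditional mean, so `E (φ(X) - φ(y))² ≤ ∑ᵢ (‖φ‖ ‖∂ᵢ²φ‖ + ‖∂ᵢφ‖²)`. The log-likelihood of `X` is a
sum of independent centred terms, each of variance at most `4`, with mean `I(y)`. By Chebyshev,
with probability at least `1/2` the values at `X` of `h`, `f` and the log-likelihood lie within
`δ₀n`, `η₀n`, `ε₀n` of `h(y)`, `f(y)`, `I(y)`. On that event `|h(X)| ≤ tn` and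
`P(X = x) ≤ e^{I(y) + ε₀n} ≤ e^{f(x) - f(y) + I(y) + η₀n + ε₀n}`; summing over the event gives
the bound at `y`.
-/

/-- The point of `{0,1}ⁿ ⊆ ℝⁿ` corresponding to a Boolean vector. -/
def boolToReal {n : ℕ} (x : Fin n → Bool) : Fin n → ℝ := fun i => if x i then 1 else 0

open Finset Function Real

section ProductBernoulli

variable {ι : Type*} [Fintype ι]

noncomputable def bernoulliWeight (p : ℝ) (b : Bool) : ℝ := if b then p else 1 - p

noncomputable def prodBernoulli (y : ι → ℝ) (x : ι → Bool) : ℝ := ∏ i, bernoulliWeight (y i) (x i)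

noncomputable def logLik (y : ι → ℝ) (x : ι → Bool) : ℝ := ∑ i, log (bernoulliWeight (y i) (x i))

variable {y : ι → ℝ}

theorem bernoulliWeight_nonneg {p : ℝ} (hp : p ∈ Set.Icc (0 : ℝ) 1) (b : Bool) :
    0 ≤ bernoulliWeight p b := by
  cases b <;> simp [bernoulliWeight, hp.1, hp.2]

theorem prodBernoulli_nonneg (hy : y ∈ Set.Icc 0 1) (x : ι → Bool) : 0 ≤ prodBernoulli y x :=
  prod_nonneg fun i _ => bernoulliWeight_nonneg ⟨hy.1 i, hy.2 i⟩ _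

/-- Equality fails only through `log 0 = 0`, when some `yᵢ ∈ {0, 1}`. -/
theorem prodBernoulli_le_exp_logLik (hy : y ∈ Set.Icc 0 1) (x : ι → Bool) :
    prodBernoulli y x ≤ exp (logLik y x) := by
  rw [logLik, exp_sum]
  exact prod_le_prod (fun i _ => bernoulliWeight_nonneg ⟨hy.1 i, hy.2 i⟩ _) fun i _ => le_exp_log _

variable [DecidableEq ι]

theorem sum_prodBernoulli (y : ι → ℝ) : ∑ x, prodBernoulli y x = 1 := by
  simp only [prodBernoulli]
  rw [← Fintype.prod_sum]
  simp [bernoulliWeight]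

/-- The conditional expectation of `F` given all coordinates but the `k`-th. -/
noncomputable def coordAvg (y : ι → ℝ) (k : ι) (F : (ι → Bool) → ℝ) (x : ι → Bool) : ℝ :=
  y k * F (update x k true) + (1 - y k) * F (update x k false)

theorem prodBernoulli_update (y : ι → ℝ) (x : ι → Bool) (k : ι) (b : Bool) :
    prodBernoulli y (update x k b) =
      bernoulliWeight (y k) b * ∏ i ∈ univ.erase k, bernoulliWeight (y i) (x i) := by
  rw [prodBernoulli, ← mul_prod_erase univ _ (mem_univ k), update_self]
  congr 1
  exact prod_congr rfl fun i hi => by rw [update_of_ne (ne_of_mem_erase hi)]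

theorem prodBernoulli_update_true_mul (y : ι → ℝ) (x : ι → Bool) (k : ι) :
    prodBernoulli y (update x k true) * (1 - y k) = prodBernoulli y (update x k false) * y k := by
  simp only [prodBernoulli_update, bernoulliWeight, if_true, Bool.false_eq_true, if_false]
  ring

theorem sum_update_true_add_update_false (G : (ι → Bool) → ℝ) (k : ι) :
    ∑ x, (G (update x k true) + G (update x k false)) = 2 * ∑ x, G x := by
  have hflip : Involutive fun x : ι → Bool => update x k (!x k) := fun x => by simp
  have hpair : ∀ x, G (update x k true) + G (update x k false) = G x + G (update x k (!x k)) := by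
    intro x
    have hx : update x k (x k) = x := update_eq_self k x
    cases h : x k <;> simp only [h] at hx <;> simp [hx, add_comm]
  rw [sum_congr rfl fun x _ => hpair x, sum_add_distrib,
    Fintype.sum_bijective _ hflip.bijective _ G fun x => rfl]
  ring

theorem sum_prodBernoulli_mul_coordAvg (y : ι → ℝ) (k : ι) (F : (ι → Bool) → ℝ) :
    ∑ x, prodBernoulli y x * coordAvg y k F x = ∑ x, prodBernoulli y x * F x := by
  have hpt : ∀ x, prodBernoulli y (update x k true) * coordAvg y k F (update x k true) +
      prodBernoulli y (update x k false) * coordAvg y k F (update x k false) =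
      prodBernoulli y (update x k true) * F (update x k true) +
      prodBernoulli y (update x k false) * F (update x k false) := by
    intro x
    simp only [coordAvg, update_idem]
    linear_combination (F (update x k false) - F (update x k true)) *
      prodBernoulli_update_true_mul y x k
  have hA := sum_update_true_add_update_false (fun x => prodBernoulli y x * coordAvg y k F x) k
  have hF := sum_update_true_add_update_false (fun x => prodBernoulli y x * F x) k
  simp only [hpt] at hA hF
  linarith

theorem sum_prodBernoulli_mul_apply (y : ι → ℝ) (k : ι) (u : Bool → ℝ) :
    ∑ x, prodBernoulli y x * u (x k) = y k * u true + (1 - y k) * u false := by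
  rw [← sum_prodBernoulli_mul_coordAvg y k]
  simp [coordAvg, ← sum_mul, sum_prodBernoulli]

theorem sum_prodBernoulli_mul_add_sq {k : ι} {Φ D : (ι → Bool) → ℝ}
    (hΦ : ∀ x b, Φ (update x k b) = Φ x) :
    ∑ x, prodBernoulli y x * (Φ x + D x) ^ 2 = ∑ x, prodBernoulli y x * Φ x ^ 2 +
      ∑ x, prodBernoulli y x * D x ^ 2 + 2 * ∑ x, prodBernoulli y x * (Φ x * coordAvg y k D x) := by
  have hcross : ∑ x, prodBernoulli y x * (Φ x * D x) =
      ∑ x, prodBernoulli y x * (Φ x * coordAvg y k D x) := by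
    rw [← sum_prodBernoulli_mul_coordAvg y k]
    refine sum_congr rfl fun x _ => ?_
    simp only [coordAvg, hΦ]
    ring
  rw [← hcross, mul_sum, ← sum_add_distrib, ← sum_add_distrib]
  exact sum_congr rfl fun x _ => by ring

theorem sum_prodBernoulli_mul_sum_sq (u : ι → Bool → ℝ)
    (hu : ∀ i, y i * u i true + (1 - y i) * u i false = 0) (s : Finset ι) :
    ∑ x, prodBernoulli y x * (∑ i ∈ s, u i (x i)) ^ 2 =
      ∑ i ∈ s, (y i * u i true ^ 2 + (1 - y i) * u i false ^ 2) := by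
  induction s using Finset.induction_on with
  | empty => simp
  | insert k s hk ih =>
    have hΦ : ∀ x b, ∑ i ∈ s, u i (update x k b i) = ∑ i ∈ s, u i (x i) := fun x b =>
      sum_congr rfl fun i hi => by rw [update_of_ne (ne_of_mem_of_not_mem hi hk)]
    have hcentred : ∀ x, coordAvg y k (fun x => u k (x k)) x = 0 := fun x => by
      simp [coordAvg, hu k]
    simp only [sum_insert hk, add_comm (u k _)]
    rw [sum_prodBernoulli_mul_add_sq hΦ, ih, sum_prodBernoulli_mul_apply y k (fun b => u k b ^ 2)]
    simp [hcentred, add_comm]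

theorem sum_prodBernoulli_filter_lt_abs_le (hy : y ∈ Set.Icc 0 1) {g : (ι → Bool) → ℝ} {V c : ℝ}
    (hc : 0 < c) (hg : ∑ x, prodBernoulli y x * g x ^ 2 ≤ V) :
    ∑ x ∈ univ.filter fun x => √(c * V) < |g x|, prodBernoulli y x ≤ 1 / c := by
  have hsq_nonneg : ∀ x ∈ univ, 0 ≤ prodBernoulli y x * g x ^ 2 := fun x _ =>
    mul_nonneg (prodBernoulli_nonneg hy x) (sq_nonneg _)
  rcases le_or_gt V 0 with hV | hV
  · have hzero := (sum_eq_zero_iff_of_nonneg hsq_nonneg).1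
      (le_antisymm (hg.trans hV) (sum_nonneg hsq_nonneg))
    refine (sum_eq_zero fun x hx => ?_).trans_le (by positivity)
    have hgx : g x ≠ 0 := abs_pos.1 ((Real.sqrt_nonneg _).trans_lt (mem_filter.1 hx).2)
    simpa [hgx] using hzero x (mem_univ x)
  · set s := √(c * V)
    have hmarkov : s ^ 2 * ∑ x ∈ univ.filter fun x => s < |g x|, prodBernoulli y x ≤ V := by
      rw [mul_sum]
      refine (sum_le_sum fun x hx => ?_).trans ((sum_le_sum_of_subset_of_nonneg (filter_subset _ _)
        fun x _ _ => hsq_nonneg x (mem_univ x)).trans hg)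
      rw [mul_comm, ← sq_abs (g x)]
      exact mul_le_mul_of_nonneg_left
        (pow_le_pow_left₀ (Real.sqrt_nonneg _) (mem_filter.1 hx).2.le 2) (prodBernoulli_nonneg hy x)
    rw [Real.sq_sqrt (by positivity)] at hmarkov
    rw [le_div_iff₀ hc]
    nlinarith

theorem one_half_le_sum_prodBernoulli_filter (hy : y ∈ Set.Icc 0 1) {g₁ g₂ g₃ : (ι → Bool) → ℝ}
    {V₁ V₂ V₃ : ℝ} (h₁ : ∑ x, prodBernoulli y x * g₁ x ^ 2 ≤ V₁)
    (h₂ : ∑ x, prodBernoulli y x * g₂ x ^ 2 ≤ V₂) (h₃ : ∑ x, prodBernoulli y x * g₃ x ^ 2 ≤ V₃) :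
    1 / 2 ≤ ∑ x ∈ univ.filter (fun x =>
      |g₁ x| ≤ √(6 * V₁) ∧ |g₂ x| ≤ √(6 * V₂) ∧ |g₃ x| ≤ √(6 * V₃)), prodBernoulli y x := by
  have hbad₁ := sum_prodBernoulli_filter_lt_abs_le hy (by norm_num : (0 : ℝ) < 6) h₁
  have hbad₂ := sum_prodBernoulli_filter_lt_abs_le hy (by norm_num : (0 : ℝ) < 6) h₂
  have hbad₃ := sum_prodBernoulli_filter_lt_abs_le hy (by norm_num : (0 : ℝ) < 6) h₃
  have hcover : ∑ x, prodBernoulli y x ≤ ∑ x ∈ univ.filter (fun x =>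
      |g₁ x| ≤ √(6 * V₁) ∧ |g₂ x| ≤ √(6 * V₂) ∧ |g₃ x| ≤ √(6 * V₃)), prodBernoulli y x +
      ∑ x ∈ univ.filter (fun x => √(6 * V₁) < |g₁ x|), prodBernoulli y x +
      ∑ x ∈ univ.filter (fun x => √(6 * V₂) < |g₂ x|), prodBernoulli y x +
      ∑ x ∈ univ.filter (fun x => √(6 * V₃) < |g₃ x|), prodBernoulli y x := by
    simp only [sum_filter, ← sum_add_distrib]
    refine sum_le_sum fun x _ => ?_
    have := prodBernoulli_nonneg hy x
    by_cases hgood : |g₁ x| ≤ √(6 * V₁) ∧ |g₂ x| ≤ √(6 * V₂) ∧ |g₃ x| ≤ √(6 * V₃)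
    · rw [if_pos hgood]
      split_ifs <;> linarith
    · rw [if_neg hgood]
      simp only [not_and_or, not_le] at hgood
      rcases hgood with h | h | h <;> simp only [if_pos h] <;> split_ifs <;> linarith
  rw [sum_prodBernoulli] at hcover
  linarith

theorem le_log_sum_exp_filter (hy : y ∈ Set.Icc 0 1) {F H : (ι → Bool) → ℝ}
    {F₀ H₀ L₀ V₁ V₂ V₃ T : ℝ}
    (hH : ∑ x, prodBernoulli y x * (H x - H₀) ^ 2 ≤ V₁)
    (hF : ∑ x, prodBernoulli y x * (F x - F₀) ^ 2 ≤ V₂)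
    (hL : ∑ x, prodBernoulli y x * (logLik y x - L₀) ^ 2 ≤ V₃)
    (hT : |H₀| + √(6 * V₁) ≤ T) :
    F₀ - L₀ - √(6 * V₃) - √(6 * V₂) - log 2 ≤
      log (∑ x ∈ univ.filter fun x => |H x| ≤ T, exp (F x)) := by
  set c := F₀ - L₀ - √(6 * V₃) - √(6 * V₂)
  set good := univ.filter fun x => |H x - H₀| ≤ √(6 * V₁) ∧ |F x - F₀| ≤ √(6 * V₂) ∧
    |logLik y x - L₀| ≤ √(6 * V₃)
  have hmass : 1 / 2 ≤ ∑ x ∈ good, prodBernoulli y x :=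
    one_half_le_sum_prodBernoulli_filter hy hH hF hL
  have hsub : good ⊆ univ.filter fun x => |H x| ≤ T := fun x hx => by
    simp only [good, mem_filter, mem_univ, true_and] at hx ⊢
    linarith [abs_sub_abs_le_abs_sub (H x) H₀]
  have htilt : ∀ x ∈ good, exp c * prodBernoulli y x ≤ exp (F x) := fun x hx => by
    obtain ⟨-, -, hFx, hLx⟩ := mem_filter.1 hx
    calc exp c * prodBernoulli y x ≤ exp c * exp (logLik y x) :=
          mul_le_mul_of_nonneg_left (prodBernoulli_le_exp_logLik hy x) (exp_pos c).le
      _ = exp (c + logLik y x) := (exp_add _ _).symm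
      _ ≤ exp (F x) := exp_le_exp.2 (by linarith [(abs_le.1 hFx).1, (abs_le.1 hLx).2])
  have hsum : exp c / 2 ≤ ∑ x ∈ univ.filter fun x => |H x| ≤ T, exp (F x) :=
    calc exp c / 2 ≤ exp c * ∑ x ∈ good, prodBernoulli y x := by
          nlinarith [exp_pos c]
      _ = ∑ x ∈ good, exp c * prodBernoulli y x := mul_sum _ _ _
      _ ≤ ∑ x ∈ good, exp (F x) := sum_le_sum htilt
      _ ≤ _ := sum_le_sum_of_subset_of_nonneg hsub fun _ _ _ => (exp_pos _).le
  rw [le_log_iff_exp_le (lt_of_lt_of_le (by positivity) hsum), exp_sub, exp_log two_pos]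
  exact hsum

theorem mul_log_sq_le_four {q : ℝ} (hq₀ : 0 ≤ q) (hq₁ : q ≤ 1) : q * log q ^ 2 ≤ 4 := by
  rcases hq₀.eq_or_lt with rfl | hq
  · simp
  have hroot : q = (q ^ (1 / 2 : ℝ)) ^ 2 := by
    rw [← rpow_natCast, ← rpow_mul hq₀]
    norm_num
  have h := abs_log_mul_self_rpow_lt q (1 / 2) hq hq₁ (by norm_num)
  calc q * log q ^ 2 = |log q * q ^ (1 / 2 : ℝ)| ^ 2 := by
        rw [sq_abs]
        nth_rewrite 1 [hroot]
        ring
    _ ≤ (1 / (1 / 2)) ^ 2 := pow_le_pow_left₀ (abs_nonneg _) h.le 2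
    _ = 4 := by norm_num

theorem mul_one_sub_mul_sq_log_sub_log_le_four {p : ℝ} (hp₀ : 0 ≤ p) (hp₁ : p ≤ 1) :
    p * (1 - p) * (log p - log (1 - p)) ^ 2 ≤ 4 := by
  have h₁ := mul_log_sq_le_four hp₀ hp₁
  have h₀ := mul_log_sq_le_four (sub_nonneg.2 hp₁) (by linarith)
  -- both logarithms are nonpositive, so `(log p - log (1 - p))² ≤ log² p + log² (1 - p)`
  have hcross : 0 ≤ log p * log (1 - p) :=
    mul_nonneg_of_nonpos_of_nonpos (log_nonpos hp₀ hp₁) (log_nonpos (by linarith) (by linarith))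
  nlinarith [mul_nonneg (mul_nonneg hp₀ (sub_nonneg.2 hp₁)) hcross,
    mul_le_mul_of_nonneg_left h₁ (sub_nonneg.2 hp₁), mul_le_mul_of_nonneg_left h₀ hp₀]

theorem sum_prodBernoulli_mul_sq_logLik_sub_le (hy : y ∈ Set.Icc 0 1) :
    ∑ x, prodBernoulli y x *
      (logLik y x - ∑ i, (y i * log (y i) + (1 - y i) * log (1 - y i))) ^ 2 ≤
      4 * Fintype.card ι := by
  set m : ι → ℝ := fun i => y i * log (y i) + (1 - y i) * log (1 - y i)
  have hcentre : ∀ x, logLik y x - ∑ i, m i = ∑ i, (log (bernoulliWeight (y i) (x i)) - m i) :=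
    fun x => by rw [logLik, sum_sub_distrib]
  simp only [hcentre]
  rw [sum_prodBernoulli_mul_sum_sq (fun i b => log (bernoulliWeight (y i) b) - m i)
    (fun i => by simp only [bernoulliWeight, m, if_true, Bool.false_eq_true, if_false]; ring) univ]
  calc _ ≤ ∑ _i : ι, (4 : ℝ) := sum_le_sum fun i _ => ?_
    _ = 4 * Fintype.card ι := by simp [mul_comm]
  have := mul_one_sub_mul_sq_log_sub_log_le_four (hy.1 i) (hy.2 i)
  simp only [bernoulliWeight, m, if_true, Bool.false_eq_true, if_false]
  linarith [show y i * (log (y i) - m i) ^ 2 + (1 - y i) * (log (1 - y i) - m i) ^ 2 =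
    y i * (1 - y i) * (log (y i) - log (1 - y i)) ^ 2 by simp only [m]; ring]

end ProductBernoulli

theorem abs_sub_sub_mul_le_of_hasDerivWithinAt {D : Set ℝ} (hD : Convex ℝ D) {g g' g'' : ℝ → ℝ}
    {C : ℝ} (hg : ∀ s ∈ D, HasDerivWithinAt g (g' s) D s)
    (hg' : ∀ s ∈ D, HasDerivWithinAt g' (g'' s) D s) (hC : ∀ s ∈ D, |g'' s| ≤ C)
    {p s : ℝ} (hp : p ∈ D) (hs : s ∈ D) :
    |g s - g p - g' p * (s - p)| ≤ C * (s - p) ^ 2 := by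
  have hlip : ∀ u ∈ D, |g' u - g' p| ≤ C * |u - p| := fun u hu => by
    simpa [Real.norm_eq_abs] using hD.norm_image_sub_le_of_norm_hasDerivWithin_le hg'
      (by simpa [Real.norm_eq_abs] using hC) hp hu
  have hseg : Set.uIcc p s ⊆ D := hD.ordConnected.uIcc_subset hp hs
  have hψ : ∀ u ∈ Set.uIcc p s,
      HasDerivWithinAt (fun u => g u - g' p * u) (g' u - g' p) (Set.uIcc p s) u := fun u hu => by
    exact (((hg u (hseg hu)).mono hseg).sub
      ((hasDerivWithinAt_id u _).const_mul (g' p))).congr_deriv (by ring)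
  have hψ' : ∀ u ∈ Set.uIcc p s, ‖g' u - g' p‖ ≤ C * |s - p| := fun u hu => by
    rw [Real.norm_eq_abs]
    refine (hlip u (hseg hu)).trans (mul_le_mul_of_nonneg_left ?_ ((abs_nonneg _).trans (hC p hp)))
    exact Set.abs_sub_left_of_mem_uIcc hu
  have := (convex_uIcc p s).norm_image_sub_le_of_norm_hasDerivWithin_le hψ hψ'
    Set.left_mem_uIcc Set.right_mem_uIcc
  rw [Real.norm_eq_abs, Real.norm_eq_abs] at this
  calc |g s - g p - g' p * (s - p)| = |g s - g' p * s - (g p - g' p * p)| := by ring_nf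
    _ ≤ C * |s - p| * |s - p| := this
    _ = C * (s - p) ^ 2 := by rw [mul_assoc, ← sq, sq_abs]

theorem abs_chord_sub_le_of_hasDerivWithinAt {g g' g'' : ℝ → ℝ} {C : ℝ}
    (hg : ∀ s ∈ Set.Icc (0 : ℝ) 1, HasDerivWithinAt g (g' s) (Set.Icc 0 1) s)
    (hg' : ∀ s ∈ Set.Icc (0 : ℝ) 1, HasDerivWithinAt g' (g'' s) (Set.Icc 0 1) s)
    (hC : ∀ s ∈ Set.Icc (0 : ℝ) 1, |g'' s| ≤ C) {p : ℝ} (hp : p ∈ Set.Icc (0 : ℝ) 1) :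
    |p * g 1 + (1 - p) * g 0 - g p| ≤ C * (p * (1 - p)) := by
  have h₁ := abs_sub_sub_mul_le_of_hasDerivWithinAt (convex_Icc 0 1) hg hg' hC hp
    (Set.right_mem_Icc.2 zero_le_one)
  have h₀ := abs_sub_sub_mul_le_of_hasDerivWithinAt (convex_Icc 0 1) hg hg' hC hp
    (Set.left_mem_Icc.2 zero_le_one)
  have hp₀ : 0 ≤ p := hp.1
  have hp₁ : 0 ≤ 1 - p := sub_nonneg.2 hp.2
  calc |p * g 1 + (1 - p) * g 0 - g p|
      = |p * (g 1 - g p - g' p * (1 - p)) + (1 - p) * (g 0 - g p - g' p * (0 - p))| := by ring_nf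
    _ ≤ p * |g 1 - g p - g' p * (1 - p)| + (1 - p) * |g 0 - g p - g' p * (0 - p)| := by
        refine (abs_add_le _ _).trans_eq ?_
        rw [abs_mul, abs_mul, abs_of_nonneg hp₀, abs_of_nonneg hp₁]
    _ ≤ p * (C * (1 - p) ^ 2) + (1 - p) * (C * (0 - p) ^ 2) := by gcongr
    _ = C * (p * (1 - p)) := by ring

section CoordinateLine

variable {ι : Type*} [DecidableEq ι] {φ : (ι → ℝ) → ℝ} {z : ι → ℝ} {k : ι}

theorem update_mem_Icc (hz : z ∈ Set.Icc (0 : ι → ℝ) 1) {s : ℝ} (hs : s ∈ Set.Icc (0 : ℝ) 1) :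
    update z k s ∈ Set.Icc (0 : ι → ℝ) 1 :=
  ⟨le_update_iff.2 ⟨hs.1, fun j _ => hz.1 j⟩, update_le_iff.2 ⟨hs.2, fun j _ => hz.2 j⟩⟩

variable [Fintype ι]

theorem hasDerivAt_comp_update (hφ : Differentiable ℝ φ) (z : ι → ℝ) (k : ι) (s : ℝ) :
    HasDerivAt (fun s => φ (update z k s)) (fderiv ℝ φ (update z k s) (Pi.single k 1)) s :=
  (hφ _).hasFDerivAt.comp_hasDerivAt s (hasDerivAt_update z k s)

theorem abs_sub_update_le (hφ : Differentiable ℝ φ) {B : ℝ}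
    (hB : ∀ x ∈ Set.Icc (0 : ι → ℝ) 1, |fderiv ℝ φ x (Pi.single k 1)| ≤ B)
    (hz : z ∈ Set.Icc 0 1) {s s' : ℝ} (hs : s ∈ Set.Icc (0 : ℝ) 1)
    (hs' : s' ∈ Set.Icc (0 : ℝ) 1) :
    |φ (update z k s) - φ (update z k s')| ≤ B * |s - s'| := by
  simpa [Real.norm_eq_abs] using (convex_Icc (0 : ℝ) 1).norm_image_sub_le_of_norm_hasDerivWithin_le
    (fun u _ => (hasDerivAt_comp_update hφ z k u).hasDerivWithinAt)
    (fun u hu => by simpa [Real.norm_eq_abs] using hB _ (update_mem_Icc hz hu)) hs' hs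

theorem abs_chord_update_le (hφ : ContDiff ℝ 2 φ) {C : ℝ}
    (hC : ∀ x ∈ Set.Icc (0 : ι → ℝ) 1,
      |fderiv ℝ (fun u => fderiv ℝ φ u (Pi.single k 1)) x (Pi.single k 1)| ≤ C)
    (hz : z ∈ Set.Icc 0 1) {p : ℝ} (hp : p ∈ Set.Icc (0 : ℝ) 1) :
    |p * φ (update z k 1) + (1 - p) * φ (update z k 0) - φ (update z k p)| ≤
      C * (p * (1 - p)) := by
  have hφ' : Differentiable ℝ fun u => fderiv ℝ φ u (Pi.single k 1) :=
    ((hφ.fderiv_right (m := 1) (by norm_num)).differentiable (by norm_num)).clm_apply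
      (differentiable_const _)
  exact abs_chord_sub_le_of_hasDerivWithinAt
    (fun s _ => (hasDerivAt_comp_update (hφ.differentiable (by norm_num)) z k s).hasDerivWithinAt)
    (fun s _ => (hasDerivAt_comp_update hφ' z k s).hasDerivWithinAt)
    (fun s hs => hC _ (update_mem_Icc hz hs)) hp

end CoordinateLine

section SmoothSecondMoment

variable {n : ℕ} {φ : (Fin n → ℝ) → ℝ} {y : Fin n → ℝ}

theorem boolToReal_mem_Icc (x : Fin n → Bool) : boolToReal x ∈ Set.Icc 0 1 :=
  ⟨fun i => by by_cases h : x i <;> simp [boolToReal, h],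
    fun i => by by_cases h : x i <;> simp [boolToReal, h]⟩

theorem sum_prodBernoulli_mul_sq_update_sub_le (hφ : Differentiable ℝ φ) {B : ℝ} {k : Fin n}
    (hB : ∀ x ∈ Set.Icc (0 : Fin n → ℝ) 1, |fderiv ℝ φ x (Pi.single k 1)| ≤ B)
    (hy : y ∈ Set.Icc 0 1) {z : (Fin n → Bool) → Fin n → ℝ} (hz : ∀ x, z x ∈ Set.Icc 0 1) :
    ∑ x, prodBernoulli y x *
      (φ (update (z x) k (boolToReal x k)) - φ (update (z x) k (y k))) ^ 2 ≤
      B ^ 2 * (y k * (1 - y k)) := by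
  calc _ ≤ ∑ x, prodBernoulli y x * (B ^ 2 * (boolToReal x k - y k) ^ 2) := by
        refine sum_le_sum fun x _ => mul_le_mul_of_nonneg_left ?_ (prodBernoulli_nonneg hy x)
        have hlip := abs_sub_update_le hφ hB (hz x)
          ⟨(boolToReal_mem_Icc x).1 k, (boolToReal_mem_Icc x).2 k⟩ ⟨hy.1 k, hy.2 k⟩
        rw [← sq_abs, ← sq_abs (boolToReal x k - y k), ← mul_pow]
        exact pow_le_pow_left₀ (abs_nonneg _) hlip 2
    _ = B ^ 2 * (y k * (1 - y k)) := by
        simp only [boolToReal]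
        rw [sum_prodBernoulli_mul_apply y k fun b => B ^ 2 * ((if b then 1 else 0) - y k) ^ 2]
        simp only [if_true, Bool.false_eq_true, if_false]
        ring

theorem abs_coordAvg_update_sub_le (hφ : ContDiff ℝ 2 φ) {C : ℝ} {k : Fin n}
    (hC : ∀ x ∈ Set.Icc (0 : Fin n → ℝ) 1,
      |fderiv ℝ (fun z => fderiv ℝ φ z (Pi.single k 1)) x (Pi.single k 1)| ≤ C)
    (hy : y ∈ Set.Icc 0 1) {z : (Fin n → Bool) → Fin n → ℝ} (hz : ∀ x, z x ∈ Set.Icc 0 1)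
    (hzk : ∀ x b, z (update x k b) = z x) (x : Fin n → Bool) :
    |coordAvg y k (fun x => φ (update (z x) k (boolToReal x k)) - φ (update (z x) k (y k))) x| ≤
      C * (y k * (1 - y k)) := by
  have havg : coordAvg y k
      (fun x => φ (update (z x) k (boolToReal x k)) - φ (update (z x) k (y k))) x =
      y k * φ (update (z x) k 1) + (1 - y k) * φ (update (z x) k 0) - φ (update (z x) k (y k)) := by
    simp only [coordAvg, hzk, boolToReal, update_self, if_true, Bool.false_eq_true, if_false]
    ring
  rw [havg]
  exact abs_chord_update_le hφ hC (hz x) ⟨hy.1 k, hy.2 k⟩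

/-- `s.piecewise (boolToReal x) y` reveals the coordinates in `s`; this is one martingale step. -/
theorem sum_prodBernoulli_mul_sq_piecewise_insert_le (hφ : ContDiff ℝ 2 φ) {A B C : ℝ}
    {k : Fin n} (hA : ∀ x ∈ Set.Icc (0 : Fin n → ℝ) 1, |φ x| ≤ A)
    (hB : ∀ x ∈ Set.Icc (0 : Fin n → ℝ) 1, |fderiv ℝ φ x (Pi.single k 1)| ≤ B)
    (hC : ∀ x ∈ Set.Icc (0 : Fin n → ℝ) 1,
      |fderiv ℝ (fun z => fderiv ℝ φ z (Pi.single k 1)) x (Pi.single k 1)| ≤ C)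
    (hy : y ∈ Set.Icc 0 1) {s : Finset (Fin n)} (hk : k ∉ s) :
    ∑ x, prodBernoulli y x * (φ ((insert k s).piecewise (boolToReal x) y) - φ y) ^ 2 ≤
      ∑ x, prodBernoulli y x * (φ (s.piecewise (boolToReal x) y) - φ y) ^ 2 +
        y k * (1 - y k) * (B ^ 2 + 4 * A * C) := by
  set z : (Fin n → Bool) → Fin n → ℝ := fun x => s.piecewise (boolToReal x) y
  have hz : ∀ x, z x ∈ Set.Icc 0 1 := fun x =>
    s.piecewise_mem_Icc_of_mem_of_mem (boolToReal_mem_Icc x) hy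
  have hzk : ∀ x b, z (update x k b) = z x := fun x b => by
    ext i
    by_cases hi : i ∈ s
    · simp [z, hi, boolToReal, update_of_ne (ne_of_mem_of_not_mem hi hk)]
    · simp [z, hi]
  have hzy : ∀ x, update (z x) k (y k) = z x := fun x =>
    update_eq_self_iff.2 (piecewise_eq_of_notMem _ _ _ hk).symm
  have hsplit : ∀ x, φ ((insert k s).piecewise (boolToReal x) y) - φ y = (φ (z x) - φ y) +
      (φ (update (z x) k (boolToReal x k)) - φ (update (z x) k (y k))) := fun x => by
    rw [piecewise_insert, hzy]
    ring
  have hcross : ∑ x, prodBernoulli y x * ((φ (z x) - φ y) * coordAvg y k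
      (fun x => φ (update (z x) k (boolToReal x k)) - φ (update (z x) k (y k))) x) ≤
      2 * A * (C * (y k * (1 - y k))) := by
    calc _ ≤ ∑ x, prodBernoulli y x * (2 * A * (C * (y k * (1 - y k)))) :=
          sum_le_sum fun x _ => mul_le_mul_of_nonneg_left ?_ (prodBernoulli_nonneg hy x)
      _ = _ := by rw [← sum_mul, sum_prodBernoulli, one_mul]
    have hΦ : |φ (z x) - φ y| ≤ 2 * A := by
      linarith [abs_sub (φ (z x)) (φ y), hA _ (hz x), hA y hy]
    refine (le_abs_self _).trans ?_
    rw [abs_mul]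
    exact mul_le_mul hΦ (abs_coordAvg_update_sub_le hφ hC hy hz hzk x) (abs_nonneg _)
      ((abs_nonneg _).trans hΦ)
  rw [sum_congr rfl fun x _ => by rw [hsplit x],
    sum_prodBernoulli_mul_add_sq (Φ := fun x => φ (z x) - φ y) fun x b => by rw [hzk]]
  linarith [sum_prodBernoulli_mul_sq_update_sub_le (hφ.differentiable two_ne_zero) hB hy hz]

theorem sum_prodBernoulli_mul_sq_sub_le (hφ : ContDiff ℝ 2 φ) {A : ℝ} {B C : Fin n → ℝ}
    (hA : ∀ x ∈ Set.Icc (0 : Fin n → ℝ) 1, |φ x| ≤ A)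
    (hB : ∀ x ∈ Set.Icc (0 : Fin n → ℝ) 1, ∀ i, |fderiv ℝ φ x (Pi.single i 1)| ≤ B i)
    (hC : ∀ x ∈ Set.Icc (0 : Fin n → ℝ) 1, ∀ i,
      |fderiv ℝ (fun z => fderiv ℝ φ z (Pi.single i 1)) x (Pi.single i 1)| ≤ C i)
    (hy : y ∈ Set.Icc 0 1) :
    ∑ x, prodBernoulli y x * (φ (boolToReal x) - φ y) ^ 2 ≤ ∑ i, (A * C i + B i ^ 2) := by
  have hgrow : ∀ s : Finset (Fin n),
      ∑ x, prodBernoulli y x * (φ (s.piecewise (boolToReal x) y) - φ y) ^ 2 ≤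
        ∑ i ∈ s, y i * (1 - y i) * (B i ^ 2 + 4 * A * C i) := by
    intro s
    induction s using Finset.induction_on with
    | empty => simp
    | insert k s hk ih =>
      rw [sum_insert hk]
      linarith [sum_prodBernoulli_mul_sq_piecewise_insert_le hφ hA (fun x hx => hB x hx k)
        (fun x hx => hC x hx k) hy hk]
  have hfull := hgrow univ
  simp only [piecewise_univ] at hfull
  refine hfull.trans (sum_le_sum fun i _ => ?_)
  have hA₀ : 0 ≤ A := (abs_nonneg _).trans (hA y hy)
  have hC₀ : 0 ≤ C i := (abs_nonneg _).trans (hC y hy i)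
  have hvar : y i * (1 - y i) ≤ 1 / 4 := by nlinarith [sq_nonneg (y i - 1 / 2)]
  nlinarith [mul_le_mul_of_nonneg_right hvar
    (add_nonneg (sq_nonneg (B i)) (mul_nonneg (mul_nonneg zero_le_four hA₀) hC₀))]

end SmoothSecondMoment

theorem sqrt_six_div_mul_sqrt_mul {N : ℝ} (hN : N ≠ 0) (V : ℝ) : √6 / N * √V * N = √(6 * V) := by
  rw [sqrt_mul (by norm_num)]
  field_simp

theorem conditional_normalization_lower_bound_general (n : ℕ) (hn : 1 ≤ n)
    (f h : (Fin n → ℝ) → ℝ) (hf : ContDiff ℝ 2 f) (hh : ContDiff ℝ 2 h)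
    (a : ℝ) (b c : Fin n → ℝ) (α : ℝ) (β γ : Fin n → ℝ)
    (ha : ∀ x ∈ Set.Icc (0 : Fin n → ℝ) 1, |f x| ≤ a)
    (hb : ∀ x ∈ Set.Icc (0 : Fin n → ℝ) 1, ∀ i, |fderiv ℝ f x (Pi.single i 1)| ≤ b i)
    (hc : ∀ x ∈ Set.Icc (0 : Fin n → ℝ) 1, ∀ i,
      |fderiv ℝ (fun z => fderiv ℝ f z (Pi.single i 1)) x (Pi.single i 1)| ≤ c i)
    (hα : ∀ x ∈ Set.Icc (0 : Fin n → ℝ) 1, |h x| ≤ α)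
    (hβ : ∀ x ∈ Set.Icc (0 : Fin n → ℝ) 1, ∀ i, |fderiv ℝ h x (Pi.single i 1)| ≤ β i)
    (hγ : ∀ x ∈ Set.Icc (0 : Fin n → ℝ) 1, ∀ i,
      |fderiv ℝ (fun z => fderiv ℝ h z (Pi.single i 1)) x (Pi.single i 1)| ≤ γ i)
    (t : ℝ)
    (δ₀ ε₀ η₀ : ℝ)
    (hδ₀ : δ₀ = Real.sqrt 6 / n * Real.sqrt (∑ i, (α * γ i + (β i)^2)))
    (hε₀ : ε₀ = 2 * Real.sqrt (6 / n))
    (hη₀ : η₀ = Real.sqrt 6 / n * Real.sqrt (∑ i, (a * c i + (b i)^2)))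
    (I : (Fin n → ℝ) → ℝ)
    (hI : ∀ x, I x = ∑ i, (x i * Real.log (x i) + (1 - x i) * Real.log (1 - x i)))
    (hne : ({x ∈ Set.Icc (0 : Fin n → ℝ) 1 | |h x| ≤ (t - δ₀) * n}).Nonempty) :
    sSup ((fun x => f x - I x) ''
        {x ∈ Set.Icc (0 : Fin n → ℝ) 1 | |h x| ≤ (t - δ₀) * n})
      - ε₀ * n - η₀ * n - Real.log 2 ≤
    Real.log (∑ x ∈ Finset.univ.filter
        (fun x : Fin n → Bool => |h (boolToReal x)| ≤ t * n),
      Real.exp (f (boolToReal x))) := by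
  have hn' : (0 : ℝ) < n := by exact_mod_cast hn
  rw [sub_sub, sub_sub, sub_le_iff_le_add]
  refine csSup_le (hne.image _) (Set.forall_mem_image.2 fun y ⟨hy, hyh⟩ => ?_)
  have hδ : δ₀ * n = √(6 * ∑ i, (α * γ i + β i ^ 2)) := by
    rw [hδ₀, sqrt_six_div_mul_sqrt_mul hn'.ne']
  have hη : η₀ * n = √(6 * ∑ i, (a * c i + b i ^ 2)) := by
    rw [hη₀, sqrt_six_div_mul_sqrt_mul hn'.ne']
  have hε : ε₀ * n = √(6 * (4 * n)) := by
    rw [hε₀, show 6 * (4 * (n : ℝ)) = (2 * n) ^ 2 * (6 / n) by field_simp; ring,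
      sqrt_mul (sq_nonneg _), sqrt_sq (by positivity)]
    ring
  have hlogLik := sum_prodBernoulli_mul_sq_logLik_sub_le hy
  rw [Fintype.card_fin] at hlogLik
  rw [hI y, hε, hη]
  linarith [le_log_sum_exp_filter hy (sum_prodBernoulli_mul_sq_sub_le hh hα hβ hγ hy)
    (sum_prodBernoulli_mul_sq_sub_le hf ha hb hc hy) hlogLik (T := t * n) (by rw [← hδ]; linarith)]

theorem conditional_normalization_lower_bound (n : ℕ) (hn : 1 ≤ n)
    (f h : (Fin n → ℝ) → ℝ) (hf : ContDiff ℝ 2 f) (hh : ContDiff ℝ 2 h)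
    (a : ℝ) (b c : Fin n → ℝ) (α : ℝ) (β γ : Fin n → ℝ)
    (ha : ∀ x ∈ Set.Icc (0 : Fin n → ℝ) 1, |f x| ≤ a)
    (hb : ∀ x ∈ Set.Icc (0 : Fin n → ℝ) 1, ∀ i, |fderiv ℝ f x (Pi.single i 1)| ≤ b i)
    (hc : ∀ x ∈ Set.Icc (0 : Fin n → ℝ) 1, ∀ i,
      |fderiv ℝ (fun z => fderiv ℝ f z (Pi.single i 1)) x (Pi.single i 1)| ≤ c i)
    (hα : ∀ x ∈ Set.Icc (0 : Fin n → ℝ) 1, |h x| ≤ α)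
    (hβ : ∀ x ∈ Set.Icc (0 : Fin n → ℝ) 1, ∀ i, |fderiv ℝ h x (Pi.single i 1)| ≤ β i)
    (hγ : ∀ x ∈ Set.Icc (0 : Fin n → ℝ) 1, ∀ i,
      |fderiv ℝ (fun z => fderiv ℝ h z (Pi.single i 1)) x (Pi.single i 1)| ≤ γ i)
    (t : ℝ) (ht : 0 < t)
    (δ₀ ε₀ η₀ : ℝ)
    (hδ₀ : δ₀ = Real.sqrt 6 / n * Real.sqrt (∑ i, (α * γ i + (β i)^2)))
    (hε₀ : ε₀ = 2 * Real.sqrt (6 / n))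
    (hη₀ : η₀ = Real.sqrt 6 / n * Real.sqrt (∑ i, (a * c i + (b i)^2)))
    (I : (Fin n → ℝ) → ℝ)
    (hI : ∀ x, I x = ∑ i, (x i * Real.log (x i) + (1 - x i) * Real.log (1 - x i)))
    (hne : ({x ∈ Set.Icc (0 : Fin n → ℝ) 1 | |h x| ≤ (t - δ₀) * n}).Nonempty) :
    sSup ((fun x => f x - I x) ''
        {x ∈ Set.Icc (0 : Fin n → ℝ) 1 | |h x| ≤ (t - δ₀) * n})
      - ε₀ * n - η₀ * n - Real.log 2 ≤
    Real.log (∑ x ∈ Finset.univ.filter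
        (fun x : Fin n → Bool => |h (boolToReal x)| ≤ t * n),
      Real.exp (f (boolToReal x))) :=
  conditional_normalization_lower_bound_general n hn f h hf hh a b c α β γ ha hb hc hα hβ hγ t δ₀ ε₀
    η₀ hδ₀ hε₀ hη₀ I hI hne
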